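/- Fix integers q₁,...,q₅ with q₂,q₃,q₄ > 0, q₅ < 0, and q₁+q₅ < 0, set q_m = max{q₂,q₃,q₄}, and let θ ∈ (0, π/2) satisfy sin θ < 1/(16√q_m). Let A₀ ∈ SU(5) be the matrix with rows (cos θ, 0, 0, 0, sin θ), (0,1,0,0,0), (0,0,0,1,0), (-sin θ, 0, 0, 0, cos θ), (0,0,1,0,0). Then A₀ ∈ V; in particular V is nonempty. -/

import Mathlib

open Finset

noncomputable section

/-- SU(5): 5×5 special unitary complex matrices. -/
def SU5 : Set (Matrix (Fin 5) (Fin 5) ℂ) :=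
  {A | A * A.conjTranspose = 1 ∧ A.det = 1}

/-- The image of the embedding Sp(2) ↪ SU(5). -/
def Sp2 : Set (Matrix (Fin 5) (Fin 5) ℂ) :=
  {h | h ∈ SU5 ∧
    (∀ i : Fin 5, h i 4 = if i = 4 then 1 else 0) ∧
    (∀ i : Fin 5, h 4 i = if i = 4 then 1 else 0) ∧
    (∀ i j : Fin 5, i < 2 → j < 2 →
      h (i + 2) (j + 2) = (starRingEnd ℂ) (h i j) ∧
      h (i + 2) j = -(starRingEnd ℂ) (h i (j + 2)))}

/-- q_m = max{q₂,q₃,q₄} (0-indexed: entries 1,2,3). -/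
def qm (q : Fin 5 → ℤ) : ℤ := max (q 1) (max (q 2) (q 3))

/-- Squared norm of the first four entries of row `i` of `B`. -/
def rowNormSq (B : Matrix (Fin 5) (Fin 5) ℂ) (i : Fin 5) : ℝ :=
  ∑ j : Fin 4, ‖B i j.castSucc‖ ^ 2

/-- The open set V ⊆ SU(5). -/
def V (q : Fin 5 → ℤ) : Set (Matrix (Fin 5) (Fin 5) ℂ) :=
  {B | B ∈ SU5 ∧
    (∀ i j : Fin 5, (i, j) ∉ ({(0,0),(1,1),(2,3),(3,4),(4,2)} : Set (Fin 5 × Fin 5)) →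
      ‖B i j‖ < 1 / (16 * Real.sqrt (qm q))) ∧
    7 / 8 < rowNormSq B 4 ∧
    Real.sqrt (rowNormSq B 0) < Real.sqrt (rowNormSq B 4) ∧
    0 < ∑ ℓ : Fin 5, (‖B ℓ 1‖ ^ 2 + ‖B ℓ 3‖ ^ 2) * (q ℓ : ℝ)}

/-!
`A₀ c s` is a rotation in the `(e₁, e₅)`-plane followed by the cyclic permutation of rows 3, 4, 5,
hence lies in SU(5) whenever `c² + s² = 1`. Off the five distinguished
positions its entries are `0` or `±s`; the first four entries of its last row form the unit
vector `e₃`, while those of its first row have norm `|c| < 1` as soon as `s ≠ 0`; and the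
weighted sum over columns 2 and 4 picks out exactly `q₂ + q₃`.
-/

def A₀ (c s : ℝ) : Matrix (Fin 5) (Fin 5) ℂ :=
  !![(c : ℂ), 0, 0, 0, (s : ℂ);
     0, 1, 0, 0, 0;
     0, 0, 0, 1, 0;
     (-s : ℂ), 0, 0, 0, (c : ℂ);
     0, 0, 1, 0, 0]

section A₀

variable {c s : ℝ}

theorem A₀_mul_conjTranspose (h : c ^ 2 + s ^ 2 = 1) :
    A₀ c s * (A₀ c s).conjTranspose = 1 := by
  have hC : (c : ℂ) ^ 2 + (s : ℂ) ^ 2 = 1 := by exact_mod_cast h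
  ext i j
  fin_cases i <;> fin_cases j <;>
    simp [A₀, Matrix.mul_apply, Fin.sum_univ_five] <;>
    first | ring1 | linear_combination hC

theorem det_A₀ (h : c ^ 2 + s ^ 2 = 1) : (A₀ c s).det = 1 := by
  have hC : (c : ℂ) ^ 2 + (s : ℂ) ^ 2 = 1 := by exact_mod_cast h
  simp [A₀, Matrix.det_succ_row_zero, Fin.sum_univ_succ, Fin.succAbove]
  linear_combination hC

theorem A₀_mem_SU5 (h : c ^ 2 + s ^ 2 = 1) : A₀ c s ∈ SU5 :=
  ⟨A₀_mul_conjTranspose h, det_A₀ h⟩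

theorem norm_A₀_apply_le {i j : Fin 5}
    (hij : (i, j) ∉ ({(0,0),(1,1),(2,3),(3,4),(4,2)} : Set (Fin 5 × Fin 5))) :
    ‖A₀ c s i j‖ ≤ |s| := by
  fin_cases i <;> fin_cases j <;> simp_all [A₀]

theorem rowNormSq_A₀_zero : rowNormSq (A₀ c s) 0 = c ^ 2 := by
  simp [rowNormSq, A₀, Fin.sum_univ_four]

theorem rowNormSq_A₀_four : rowNormSq (A₀ c s) 4 = 1 := by
  simp [rowNormSq, A₀, Fin.sum_univ_four]

theorem sum_norm_sq_A₀_mul (q : Fin 5 → ℤ) :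
    ∑ ℓ : Fin 5, (‖A₀ c s ℓ 1‖ ^ 2 + ‖A₀ c s ℓ 3‖ ^ 2) * (q ℓ : ℝ) = q 1 + q 2 := by
  simp [A₀, Fin.sum_univ_five]

theorem A₀_mem_V {q : Fin 5 → ℤ} (hq : 0 < q 1 + q 2) (h : c ^ 2 + s ^ 2 = 1)
    (hs : 0 < s) (hs_lt : s < 1 / (16 * Real.sqrt (qm q))) : A₀ c s ∈ V q := by
  have hc : c ^ 2 < 1 := by nlinarith
  refine ⟨A₀_mem_SU5 h, fun i j hij => ?_, ?_, ?_, ?_⟩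
  · exact (norm_A₀_apply_le hij).trans_lt (by rwa [abs_of_pos hs])
  · rw [rowNormSq_A₀_four]; norm_num
  · rw [rowNormSq_A₀_zero, rowNormSq_A₀_four]
    exact Real.sqrt_lt_sqrt (sq_nonneg c) hc
  · rw [sum_norm_sq_A₀_mul]; exact_mod_cast hq

end A₀

theorem stmt11_general (q : Fin 5 → ℤ) (h2 : 0 < q 1) (h3 : 0 < q 2)
    (θ : ℝ) (hθ0 : 0 < θ) (hθ1 : θ < Real.pi / 2)
    (hθ : Real.sin θ < 1 / (16 * Real.sqrt (qm q))) :
    (!![(Real.cos θ : ℂ), 0, 0, 0, (Real.sin θ : ℂ);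
        0, 1, 0, 0, 0;
        0, 0, 0, 1, 0;
        (-(Real.sin θ) : ℂ), 0, 0, 0, (Real.cos θ : ℂ);
        0, 0, 1, 0, 0] ∈ V q) ∧ (V q).Nonempty := by
  have hsin : 0 < Real.sin θ :=
    Real.sin_pos_of_pos_of_lt_pi hθ0 (hθ1.trans (half_lt_self Real.pi_pos))
  have hA : A₀ (Real.cos θ) (Real.sin θ) ∈ V q :=
    A₀_mem_V (add_pos h2 h3) (Real.cos_sq_add_sin_sq θ) hsin hθ
  exact ⟨hA, _, hA⟩

theorem stmt11 (q : Fin 5 → ℤ) (h2 : 0 < q 1) (h3 : 0 < q 2) (h4 : 0 < q 3)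
    (h5 : q 4 < 0) (h15 : q 0 + q 4 < 0)
    (θ : ℝ) (hθ0 : 0 < θ) (hθ1 : θ < Real.pi / 2)
    (hθ : Real.sin θ < 1 / (16 * Real.sqrt (qm q))) :
    (!![(Real.cos θ : ℂ), 0, 0, 0, (Real.sin θ : ℂ);
        0, 1, 0, 0, 0;
        0, 0, 0, 1, 0;
        (-(Real.sin θ) : ℂ), 0, 0, 0, (Real.cos θ : ℂ);
        0, 0, 1, 0, 0] ∈ V q) ∧ (V q).Nonempty :=
  stmt11_general q h2 h3 θ hθ0 hθ1 hθ
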